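/- Let $p_0$ and $p$ be continuously differentiable, strictly positive probability densities on $\mathbb{R}_+^m=(0,\infty)^m$ (each integrating to $1$), and let $h_1,\dots,h_m:(0,\infty)\to[0,\infty)$ be measurable functions that are strictly positive almost everywhere. If the generalized $h$-score matching loss satisfies $J_h(p)=0$, then $p(x)=p_0(x)$ for all $x\in(0,\infty)^m$. In particular, $J_h(p)\ge 0$ with equality if and only if $p=p_0$. -/

import Mathlib

open MeasureTheory Filter Topology Set
open scoped ENNReal

/-- Partial derivative of `f : ℝ^m → ℝ` in the `j`-th coordinate. -/
noncomputable def pd {m : ℕ} (f : (Fin m → ℝ) → ℝ) (j : Fin m) (x : Fin m → ℝ) : ℝ :=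
  deriv (fun t => f (Function.update x j t)) (x j)

lemma hasDerivAt_update' {m : ℕ} (x : Fin m → ℝ) (j : Fin m) (t₀ : ℝ) :
    HasDerivAt (fun t => Function.update x j t) (Pi.single j 1 : Fin m → ℝ) t₀ := by
  have key : (fun t : ℝ => Function.update x j t)
      = fun t => Function.update x j t₀ + (t - t₀) • (Pi.single j 1 : Fin m → ℝ) := by
    funext t; funext k
    rcases eq_or_ne k j with rfl | hk
    · simp
    · simp [Function.update_of_ne hk, Pi.single_eq_of_ne hk]
  rw [key]
  simpa using (((hasDerivAt_id t₀).sub_const t₀).smul_const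
    ((Pi.single j 1 : Fin m → ℝ))).const_add (Function.update x j t₀)

lemma pd_eq_fderiv {m : ℕ} {f : (Fin m → ℝ) → ℝ} {x : Fin m → ℝ}
    {L : (Fin m → ℝ) →L[ℝ] ℝ} (j : Fin m) (hf : HasFDerivAt f L x) :
    pd f j x = L (Pi.single j 1) := by
  have hu := hasDerivAt_update' x j (x j)
  have hx : Function.update x j (x j) = x := Function.update_eq_self j x
  have : HasDerivAt (fun t => f (Function.update x j t)) (L (Pi.single j 1)) (x j) :=
    (hx ▸ hf).comp_hasDerivAt (x j) hu
  exact this.deriv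

lemma clm_zero_of_single {m : ℕ} (L : (Fin m → ℝ) →L[ℝ] ℝ)
    (hL : ∀ j, L (Pi.single j 1) = 0) : L = 0 := by
  ext v
  have hv : v = ∑ j : Fin m, v j • (Pi.single j 1 : Fin m → ℝ) := by
    funext k
    simp [Finset.sum_apply, Pi.single_apply]
  rw [hv]
  simp [map_sum, hL]


/-- Identifiability for generalized score matching: if `p₀, p` are continuously
differentiable strictly positive probability densities on `(0,∞)^m`, and the weight
functions `h_j : (0,∞) → [0,∞)` are measurable and a.e. strictly positive, then the
generalized `h`-score matching loss
`J_h(p) = ½ ∫ p₀ ∑_j h_j(x_j) (∂_j log p - ∂_j log p₀)²` (valued in `[0,∞]`)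
vanishes iff `p = p₀` on `(0,∞)^m`. -/
theorem stmt2 {m : ℕ} (p0 p : (Fin m → ℝ) → ℝ) (h : Fin m → ℝ → ℝ)
    (Ω : Set (Fin m → ℝ)) (hΩ : Ω = Set.univ.pi fun _ : Fin m => Ioi (0:ℝ))
    (hp0smooth : ContDiffOn ℝ 1 p0 Ω) (hpsmooth : ContDiffOn ℝ 1 p Ω)
    (hp0pos : ∀ x ∈ Ω, 0 < p0 x) (hppos : ∀ x ∈ Ω, 0 < p x)
    (hp0one : ∫ x in Ω, p0 x = 1) (hpone : ∫ x in Ω, p x = 1)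
    (hhmeas : ∀ j, Measurable (h j))
    (hhnonneg : ∀ j, ∀ t ∈ Ioi (0:ℝ), 0 ≤ h j t)
    (hhpos : ∀ j, ∀ᵐ t ∂(volume.restrict (Ioi (0:ℝ))), 0 < h j t)
    (J : ℝ≥0∞)
    (hJ : J = ∫⁻ x in Ω, ENNReal.ofReal ((1/2) * p0 x * ∑ j, h j (x j) *
        (pd (fun y => Real.log (p y)) j x - pd (fun y => Real.log (p0 y)) j x) ^ 2)) :
    (J = 0 → ∀ x ∈ Ω, p x = p0 x) ∧ (J = 0 ↔ ∀ x ∈ Ω, p x = p0 x) := by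
  have hopen : IsOpen Ω := by
    rw [hΩ]; exact isOpen_set_pi finite_univ fun j _ => isOpen_Ioi
  have hconv : Convex ℝ Ω := by
    rw [hΩ]; exact convex_pi fun j _ => convex_Ioi 0
  have hmeasΩ : MeasurableSet Ω := hopen.measurableSet
  have hmemΩ : ∀ x ∈ Ω, ∀ j, (0:ℝ) < x j := by
    intro x hx j; rw [hΩ] at hx; exact hx j (mem_univ j)
  have hmemΩ' : ∀ x : Fin m → ℝ, (∀ j, (0:ℝ) < x j) → x ∈ Ω := by
    intro x hx; rw [hΩ]; exact fun j _ => hx j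
  set g : (Fin m → ℝ) → ℝ := fun x => Real.log (p x) - Real.log (p0 x) with hgdef
  have hpne : ∀ x ∈ Ω, p x ≠ 0 := fun x hx => (hppos x hx).ne'
  have hp0ne : ∀ x ∈ Ω, p0 x ≠ 0 := fun x hx => (hp0pos x hx).ne'
  have hgsmooth : ContDiffOn ℝ 1 g Ω := (hpsmooth.log hpne).sub (hp0smooth.log hp0ne)
  have hlpdiff : ∀ x ∈ Ω, DifferentiableAt ℝ (fun y => Real.log (p y)) x := fun x hx =>
    (((hpsmooth.contDiffAt (hopen.mem_nhds hx)).differentiableAt one_ne_zero)).log (hpne x hx)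
  have hlp0diff : ∀ x ∈ Ω, DifferentiableAt ℝ (fun y => Real.log (p0 y)) x := fun x hx =>
    (((hp0smooth.contDiffAt (hopen.mem_nhds hx)).differentiableAt one_ne_zero)).log (hp0ne x hx)
  set D : Fin m → (Fin m → ℝ) → ℝ := fun j x => fderiv ℝ g x (Pi.single j 1) with hDdef
  have hpdD : ∀ x ∈ Ω, ∀ j, pd (fun y => Real.log (p y)) j x
      - pd (fun y => Real.log (p0 y)) j x = D j x := by
    intro x hx j
    have h1 := (hlpdiff x hx).hasFDerivAt
    have h0 := (hlp0diff x hx).hasFDerivAt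
    have hgF : HasFDerivAt g (fderiv ℝ (fun y => Real.log (p y)) x
        - fderiv ℝ (fun y => Real.log (p0 y)) x) x := h1.sub h0
    rw [pd_eq_fderiv j h1, pd_eq_fderiv j h0]
    simp only [hDdef]
    rw [hgF.fderiv]
    simp
  have key : J = 0 → ∀ x ∈ Ω, p x = p0 x := by
    intro hJ0
    rw [hJ] at hJ0
    have hDcont : ∀ j, ContinuousOn (D j) Ω := by
      intro j
      have h1 : ContinuousOn (fderivWithin ℝ g Ω) Ω :=
        (hgsmooth.fderivWithin (m := 0) hopen.uniqueDiffOn (by norm_num)).continuousOn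
      have h2 : ContinuousOn (fderiv ℝ g) Ω :=
        h1.congr fun x hx => (fderivWithin_of_isOpen hopen hx).symm
      exact h2.clm_apply continuousOn_const
    set F : (Fin m → ℝ) → ℝ≥0∞ := fun x => ENNReal.ofReal ((1/2) * p0 x * ∑ j, h j (x j) *
        (pd (fun y => Real.log (p y)) j x - pd (fun y => Real.log (p0 y)) j x) ^ 2) with hFdef
    set G : (Fin m → ℝ) → ℝ≥0∞ := fun x => ENNReal.ofReal ((1/2) * p0 x * ∑ j,
        h j (x j) * (D j x) ^ 2) with hGdef
    have hFG : ∀ x ∈ Ω, F x = G x := by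
      intro x hx
      simp only [hFdef, hGdef]
      congr 2
      exact Finset.sum_congr rfl fun j _ => by rw [hpdD x hx j]
    have hGaem : AEMeasurable G (volume.restrict Ω) := by
      refine ENNReal.measurable_ofReal.comp_aemeasurable ?_
      refine AEMeasurable.mul
        (aemeasurable_const.mul (hp0smooth.continuousOn.aemeasurable hmeasΩ)) ?_
      refine Finset.aemeasurable_fun_sum _ fun j _ => AEMeasurable.mul ?_ ?_
      · exact ((hhmeas j).comp (measurable_pi_apply j)).aemeasurable
      · exact ((hDcont j).aemeasurable hmeasΩ).pow_const 2
    have hFaem : AEMeasurable F (volume.restrict Ω) :=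
      hGaem.congr ((ae_restrict_mem hmeasΩ).mono fun x hx => (hFG x hx).symm)
    have hF0 : ∀ᵐ x ∂(volume.restrict Ω), F x = 0 := (lintegral_eq_zero_iff' hFaem).mp hJ0
    have hhae : ∀ j, ∀ᵐ x ∂(volume.restrict Ω), 0 < h j (x j) := by
      intro j
      have hBmeas : MeasurableSet {t : ℝ | ¬ 0 < h j t} :=
        (measurableSet_lt measurable_const (hhmeas j)).compl
      have hB : volume ({t : ℝ | ¬ 0 < h j t} ∩ Ioi 0) = 0 := by
        have h1 := ae_iff.mp (hhpos j)
        rwa [Measure.restrict_apply hBmeas] at h1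
      have hnull : volume ((fun x : Fin m → ℝ => x j) ⁻¹' ({t : ℝ | ¬ 0 < h j t} ∩ Ioi 0)) = 0 := by
        rw [volume_pi]
        exact Measure.pi_eval_preimage_null _ hB
      rw [ae_restrict_iff' hmeasΩ]
      rw [ae_iff]
      refine measure_mono_null ?_ hnull
      intro x hx
      simp only [mem_setOf_eq, not_forall] at hx
      obtain ⟨hxΩ, hxh⟩ := hx
      exact ⟨hxh, hmemΩ x hxΩ j⟩
    have hae : ∀ᵐ x ∂(volume.restrict Ω), ∀ j, D j x = 0 := by
      have hall : ∀ᵐ x ∂(volume.restrict Ω), ∀ j, 0 < h j (x j) := ae_all_iff.mpr hhae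
      filter_upwards [ae_restrict_mem hmeasΩ, hall, hF0] with x hx hhx hFx
      intro j
      rw [hFG x hx] at hFx
      simp only [hGdef, ENNReal.ofReal_eq_zero] at hFx
      have hterm : ∀ k ∈ Finset.univ, 0 ≤ h k (x k) * (D k x) ^ 2 := fun k _ =>
        mul_nonneg (le_of_lt (hhx k)) (sq_nonneg _)
      have hsumnn : 0 ≤ ∑ k, h k (x k) * (D k x) ^ 2 := Finset.sum_nonneg hterm
      have hsum0 : ∑ k, h k (x k) * (D k x) ^ 2 = 0 := by
        nlinarith [hp0pos x hx]
      have hJ0' := (Finset.sum_eq_zero_iff_of_nonneg hterm).mp hsum0 j (Finset.mem_univ j)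
      have h2 : (D j x) ^ 2 = 0 := by
        rcases mul_eq_zero.mp hJ0' with h' | h'
        · exact absurd h' (ne_of_gt (hhx j))
        · exact h'
      exact pow_eq_zero_iff two_ne_zero |>.mp h2
    have hDzero : ∀ x ∈ Ω, ∀ j, D j x = 0 := by
      intro x₀ hx₀ j
      by_contra hne
      have hcw : ContinuousWithinAt (D j) Ω x₀ := (hDcont j) x₀ hx₀
      have hmemnhds : {y : ℝ | y ≠ 0} ∈ 𝓝 (D j x₀) := isOpen_ne.mem_nhds hne
      have hpre : (D j) ⁻¹' {y | y ≠ 0} ∈ 𝓝[Ω] x₀ := hcw hmemnhds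
      rw [hopen.nhdsWithin_eq hx₀] at hpre
      obtain ⟨W, hWsub, hWopen, hxW⟩ := mem_nhds_iff.mp hpre
      have hW'open : IsOpen (W ∩ Ω) := hWopen.inter hopen
      have hpos : 0 < volume (W ∩ Ω) := hW'open.measure_pos volume ⟨x₀, hxW, hx₀⟩
      have h1 : volume.restrict Ω (W ∩ Ω) ≤ volume.restrict Ω {x | ¬ ∀ k, D k x = 0} :=
        measure_mono fun z hz' hall => hWsub hz'.1 (hall j)
      have h2 : volume.restrict Ω (W ∩ Ω) = 0 :=
        le_antisymm (le_trans h1 (le_of_eq (ae_iff.mp hae))) zero_le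
      rw [Measure.restrict_apply hW'open.measurableSet,
        inter_eq_left.mpr inter_subset_right] at h2
      exact absurd h2 hpos.ne'
    have hgdiffOn : DifferentiableOn ℝ g Ω := hgsmooth.differentiableOn one_ne_zero
    have hfz : ∀ x ∈ Ω, fderivWithin ℝ g Ω x = 0 := by
      intro x hx
      rw [fderivWithin_of_isOpen hopen hx]
      exact clm_zero_of_single _ fun j => hDzero x hx j
    have hy₀ : (fun _ : Fin m => (1:ℝ)) ∈ Ω := hmemΩ' _ fun j => one_pos
    have hconst : ∀ z ∈ Ω, g z = g (fun _ => 1) := fun z hz =>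
      hconv.is_const_of_fderivWithin_eq_zero hgdiffOn hfz hz hy₀
    set c := g (fun _ : Fin m => (1:ℝ)) with hc
    have hpexp : ∀ z ∈ Ω, p z = Real.exp c * p0 z := by
      intro z hz
      have h1 : Real.log (p z) = c + Real.log (p0 z) := by
        have h2 := hconst z hz
        simp only [hgdef] at h2
        linarith [h2]
      calc p z = Real.exp (Real.log (p z)) := (Real.exp_log (hppos z hz)).symm
        _ = Real.exp c * Real.exp (Real.log (p0 z)) := by rw [h1, Real.exp_add]
        _ = Real.exp c * p0 z := by rw [Real.exp_log (hp0pos z hz)]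
    have hint : ∫ z in Ω, p z = Real.exp c * ∫ z in Ω, p0 z := by
      calc ∫ z in Ω, p z = ∫ z in Ω, Real.exp c * p0 z :=
            setIntegral_congr_fun hmeasΩ fun z hz => hpexp z hz
        _ = Real.exp c * ∫ z in Ω, p0 z := integral_const_mul _ _
    rw [hpone, hp0one, mul_one] at hint
    have hc0 : c = 0 := by
      have h3 := Real.log_exp c
      rw [← hint, Real.log_one] at h3
      exact h3.symm
    intro x hx
    rw [hpexp x hx, hc0, Real.exp_zero, one_mul]
  have rev : (∀ x ∈ Ω, p x = p0 x) → J = 0 := by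
    intro heq
    rw [hJ]
    have hzero : ∀ x ∈ Ω, ENNReal.ofReal ((1/2) * p0 x * ∑ j, h j (x j) *
        (pd (fun y => Real.log (p y)) j x - pd (fun y => Real.log (p0 y)) j x) ^ 2) = 0 := by
      intro x hx
      have hpd0 : ∀ j, pd (fun y => Real.log (p y)) j x
          = pd (fun y => Real.log (p0 y)) j x := by
        intro j
        apply Filter.EventuallyEq.deriv_eq
        have hIoi : Ioi (0:ℝ) ∈ 𝓝 (x j) := isOpen_Ioi.mem_nhds (hmemΩ x hx j)
        filter_upwards [hIoi] with t ht
        have hup : Function.update x j t ∈ Ω := hmemΩ' _ fun k => by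
          rcases eq_or_ne k j with rfl | hk
          · simpa using ht
          · simpa [Function.update_of_ne hk] using hmemΩ x hx k
        simp only [heq _ hup]
      have : ∑ j, h j (x j) * (pd (fun y => Real.log (p y)) j x
          - pd (fun y => Real.log (p0 y)) j x) ^ 2 = 0 := by
        refine Finset.sum_eq_zero fun j _ => ?_
        rw [hpd0 j]
        simp
      rw [this, mul_zero, ENNReal.ofReal_zero]
    calc (∫⁻ x in Ω, ENNReal.ofReal ((1/2) * p0 x * ∑ j, h j (x j) *
        (pd (fun y => Real.log (p y)) j x - pd (fun y => Real.log (p0 y)) j x) ^ 2))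
        = ∫⁻ _ in Ω, 0 := by
          refine setLIntegral_congr_fun hmeasΩ ?_
          exact fun x hx => hzero x hx
      _ = 0 := by simp
  exact ⟨key, key, rev⟩
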